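/- Let a, b, c ∈ ℂ with a = b + c, and let P_{ij} be the cubic Sklyanin structure functions on ℂ⁴: P(s_0,s_1) = −2b s_0 s_2 s_3, P(s_0,s_2) = 2a s_0 s_1 s_3, P(s_0,s_3) = −2c s_0 s_1 s_2, P(s_1,s_2) = s_3 (a s_1² + b s_2² − s_0²), P(s_1,s_3) = s_2 (s_0² − c s_1² + b s_3²), P(s_2,s_3) = −s_1 (s_0² + c s_2² + a s_3²) (extended antisymmetrically). Set N = s_0² + a s_1² + b s_2² and D = s_1² + s_2² + s_3². Then both rational functions N/D and D/s_0 are Casimirs of the cubic bracket in the cleared-denominator sense: for every index i ∈ {0,1,2,3} and every point p ∈ ℂ⁴, Σ_{l=0}^{3} [ (∂N/∂s_l)(p) D(p) − N(p) (∂D/∂s_l)(p) ] P_{li}(p) = 0 and Σ_{l=0}^{3} [ (∂D/∂s_l)(p) s_0 − D(p) (∂s_0/∂s_l) ] P_{li}(p) = 0. -/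

import Mathlib

open BigOperators

noncomputable section

/-- Partial derivative of `f : ℂⁿ → ℂ` in the `l`-th coordinate at the point `p`. -/
def pderiv' {n : ℕ} (l : Fin n) (f : (Fin n → ℂ) → ℂ) (p : Fin n → ℂ) : ℂ :=
  deriv (fun t => f (Function.update p l t)) (p l)

/-- Antisymmetric structure functions of the cubic Sklyanin bracket on ℂ⁴,
coordinates `s₀, s₁, s₂, s₃`. -/
def Pcub (a b c : ℂ) (i j : Fin 4) (s : Fin 4 → ℂ) : ℂ :=
  !![0,
     -2 * b * s 0 * s 2 * s 3,
     2 * a * s 0 * s 1 * s 3,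
     -2 * c * s 0 * s 1 * s 2;
     2 * b * s 0 * s 2 * s 3,
     0,
     s 3 * (a * (s 1) ^ 2 + b * (s 2) ^ 2 - (s 0) ^ 2),
     s 2 * ((s 0) ^ 2 - c * (s 1) ^ 2 + b * (s 3) ^ 2);
     -2 * a * s 0 * s 1 * s 3,
     -(s 3 * (a * (s 1) ^ 2 + b * (s 2) ^ 2 - (s 0) ^ 2)),
     0,
     -(s 1 * ((s 0) ^ 2 + c * (s 2) ^ 2 + a * (s 3) ^ 2));
     2 * c * s 0 * s 1 * s 2,
     -(s 2 * ((s 0) ^ 2 - c * (s 1) ^ 2 + b * (s 3) ^ 2)),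
     s 1 * ((s 0) ^ 2 + c * (s 2) ^ 2 + a * (s 3) ^ 2),
     0] i j

/-- `N = s₀² + a s₁² + b s₂²`. -/
def Npoly (a b : ℂ) (s : Fin 4 → ℂ) : ℂ := (s 0) ^ 2 + a * (s 1) ^ 2 + b * (s 2) ^ 2

/-- `D = s₁² + s₂² + s₃²`. -/
def Dpoly (s : Fin 4 → ℂ) : ℂ := (s 1) ^ 2 + (s 2) ^ 2 + (s 3) ^ 2

/-!
For a polynomial `F`, `{F, s_i}` is linear in the gradient of `F`, so the cleared-denominator
Casimir condition for `F/G` reads `G {F, s_i} - F {G, s_i} = 0`. It therefore suffices that `F`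
and `G` are eigenfunctions of every `{·, s_i}` with a common eigenvalue. For `N`, `D` and `s₀`
this eigenvalue is `P_{0i} / s₀` (every `P_{0i}` is divisible by `s₀`); that `N` and `D` have it
is a direct computation which uses `a = b + c`.
-/

/-- Writing `{F, G}` for the bracket `{s_i, s_j} = P_{ij}` extended as a biderivation, this is
`{F, s_i}` at `p`. -/
def bracketCoord {n : ℕ} (P : Fin n → Fin n → (Fin n → ℂ) → ℂ) (F : (Fin n → ℂ) → ℂ)
    (i : Fin n) (p : Fin n → ℂ) : ℂ :=
  ∑ l, pderiv' l F p * P l i p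

lemma pderiv'_coord {n : ℕ} (l j : Fin n) (p : Fin n → ℂ) :
    pderiv' l (fun q => q j) p = if j = l then 1 else 0 := by
  by_cases h : j = l
  · subst h
    simp [pderiv']
  · simp [pderiv', h]

lemma casimir_of_bracketCoord_eq_mul {n : ℕ} {P : Fin n → Fin n → (Fin n → ℂ) → ℂ}
    {F G : (Fin n → ℂ) → ℂ} {i : Fin n} {p : Fin n → ℂ} {q : ℂ}
    (hF : bracketCoord P F i p = F p * q) (hG : bracketCoord P G i p = G p * q) :
    ∑ l, (pderiv' l F p * G p - F p * pderiv' l G p) * P l i p = 0 := by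
  have hsum : ∑ l, (pderiv' l F p * G p - F p * pderiv' l G p) * P l i p =
      bracketCoord P F i p * G p - F p * bracketCoord P G i p := by
    simp only [bracketCoord, Finset.sum_mul, Finset.mul_sum, ← Finset.sum_sub_distrib]
    exact Finset.sum_congr rfl fun l _ => by ring
  rw [hsum, hF, hG]
  ring

lemma pderiv'_Npoly (a b : ℂ) (l : Fin 4) (p : Fin 4 → ℂ) :
    pderiv' l (Npoly a b) p = ![2 * p 0, 2 * a * p 1, 2 * b * p 2, 0] l := by
  fin_cases l <;> simp [pderiv', Npoly, Function.update] <;> ring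

lemma pderiv'_Dpoly (l : Fin 4) (p : Fin 4 → ℂ) :
    pderiv' l Dpoly p = ![0, 2 * p 1, 2 * p 2, 2 * p 3] l := by
  fin_cases l <;> simp [pderiv', Dpoly, Function.update]

/-- `P_{0i} / s₀`. -/
def sklyaninCofactor (a b c : ℂ) (i : Fin 4) (s : Fin 4 → ℂ) : ℂ :=
  ![0, -2 * b * s 2 * s 3, 2 * a * s 1 * s 3, -2 * c * s 1 * s 2] i

lemma bracketCoord_coord_zero (a b c : ℂ) (i : Fin 4) (p : Fin 4 → ℂ) :
    bracketCoord (Pcub a b c) (fun q => q 0) i p = p 0 * sklyaninCofactor a b c i p := by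
  fin_cases i <;>
    simp [bracketCoord, pderiv'_coord, Pcub, sklyaninCofactor] <;> ring

lemma bracketCoord_Npoly {a b c : ℂ} (habc : a = b + c) (i : Fin 4) (p : Fin 4 → ℂ) :
    bracketCoord (Pcub a b c) (Npoly a b) i p = Npoly a b p * sklyaninCofactor a b c i p := by
  subst habc
  fin_cases i <;>
    simp [bracketCoord, Fin.sum_univ_four, pderiv'_Npoly, Pcub, Npoly, sklyaninCofactor] <;> ring

lemma bracketCoord_Dpoly {a b c : ℂ} (habc : a = b + c) (i : Fin 4) (p : Fin 4 → ℂ) :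
    bracketCoord (Pcub a b c) Dpoly i p = Dpoly p * sklyaninCofactor a b c i p := by
  subst habc
  fin_cases i <;>
    simp [bracketCoord, Fin.sum_univ_four, pderiv'_Dpoly, Pcub, Dpoly, sklyaninCofactor] <;> ring

/-- for `a = b + c`, the rational functions `N/D` and `D/s₀` are
Casimirs of the cubic Sklyanin bracket on ℂ⁴, in the cleared-denominator sense. -/
theorem statement16 (a b c : ℂ) (habc : a = b + c) :
    ∀ (i : Fin 4) (p : Fin 4 → ℂ),
      (∑ l : Fin 4,
        (pderiv' l (Npoly a b) p * Dpoly p - Npoly a b p * pderiv' l Dpoly p) *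
          Pcub a b c l i p = 0) ∧
      (∑ l : Fin 4,
        (pderiv' l Dpoly p * p 0 - Dpoly p * pderiv' l (fun q => q 0) p) *
          Pcub a b c l i p = 0) := by
  intro i p
  exact ⟨casimir_of_bracketCoord_eq_mul (bracketCoord_Npoly habc i p) (bracketCoord_Dpoly habc i p),
    casimir_of_bracketCoord_eq_mul (G := fun q => q 0) (bracketCoord_Dpoly habc i p)
      (bracketCoord_coord_zero a b c i p)⟩

end
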